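/- Let C ⊆ ℝⁿ be nonempty with diameter bounded by D ≥ 0, let f : ℝⁿ → ℝ, and suppose there exists γ > 0 such that |f(x) − f(x̄) − Δ(x̄, x − x̄)| ≤ γ‖x − x̄‖² for all x, x̄ ∈ C, where Δ : ℝⁿ × ℝⁿ → ℝ satisfies Δ(x̄, 0) = 0 for all x̄. Given x_t ∈ C, v_t ∈ C with Δ(x_t, α_t(v_t − x_t)) ≤ 0, α_t ∈ (0,1], and x_{t+1} = (1 − α_t) x_t + α_t v_t, it holds that 0 ≤ −Δ(x_t, α_t(v_t − x_t))/α_t ≤ (f(x_t) − f(x_{t+1}))/α_t + α_t γ D². -/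

import Mathlib

/-!
Apply the second-order approximation property at the pair (x_{t+1}, x_t), which lies in `C` by
convexity: since `x_{t+1} - x_t = α_t (v_t - x_t)`, it gives
`-Δ(x_t, α_t (v_t - x_t)) ≤ f(x_t) - f(x_{t+1}) + γ α_t² ‖v_t - x_t‖² ≤ f(x_t) - f(x_{t+1}) + α_t² γ D²`,
and dividing by `α_t > 0` yields the estimate.
-/

section ModelDescent

variable {E : Type*} [NormedAddCommGroup E]

lemma neg_model_le_of_abs_approx_le (f : E → ℝ) (Δ : E → E → ℝ) {γ : ℝ} {x y : E}
    (h : |f y - f x - Δ x (y - x)| ≤ γ * ‖y - x‖ ^ 2) :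
    -Δ x (y - x) ≤ f x - f y + γ * ‖y - x‖ ^ 2 := by
  linarith [(abs_le.1 h).2]

variable [NormedSpace ℝ E]

lemma sq_norm_smul_le_of_norm_le {α D : ℝ} {u : E} (hα : 0 ≤ α) (hu : ‖u‖ ≤ D) :
    ‖α • u‖ ^ 2 ≤ α ^ 2 * D ^ 2 := by
  rw [norm_smul, Real.norm_of_nonneg hα, mul_pow]
  gcongr

lemma neg_model_le_of_convex_step {C : Set E} (hC : Convex ℝ C) {D : ℝ}
    (hdiam : ∀ u ∈ C, ∀ w ∈ C, ‖u - w‖ ≤ D) (f : E → ℝ) (Δ : E → E → ℝ) {γ : ℝ} (hγ : 0 ≤ γ)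
    (happrox : ∀ x ∈ C, ∀ xbar ∈ C, |f x - f xbar - Δ xbar (x - xbar)| ≤ γ * ‖x - xbar‖ ^ 2)
    {x v : E} (hx : x ∈ C) (hv : v ∈ C) {α : ℝ} (hα : α ∈ Set.Icc (0 : ℝ) 1) :
    -Δ x (α • (v - x)) ≤ f x - f (x + α • (v - x)) + α ^ 2 * γ * D ^ 2 := by
  have hstep : x + α • (v - x) ∈ C := hC.add_smul_sub_mem hx hv hα
  have hdescent := neg_model_le_of_abs_approx_le f Δ (happrox _ hstep x hx)
  rw [add_sub_cancel_left] at hdescent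
  have hsq := sq_norm_smul_le_of_norm_le hα.1 (hdiam v hv x hx)
  linarith [mul_le_mul_of_nonneg_left hsq hγ]

end ModelDescent

theorem per_iteration_descent_estimate_general {n : ℕ}
    (C : Set (EuclideanSpace ℝ (Fin n))) (hCconv : Convex ℝ C)
    (D : ℝ) (hdiam : ∀ u ∈ C, ∀ w ∈ C, ‖u - w‖ ≤ D)
    (f : EuclideanSpace ℝ (Fin n) → ℝ)
    (Δ : EuclideanSpace ℝ (Fin n) → EuclideanSpace ℝ (Fin n) → ℝ)
    (γ : ℝ) (hγ : 0 < γ)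
    (happrox : ∀ x ∈ C, ∀ xbar ∈ C, |f x - f xbar - Δ xbar (x - xbar)| ≤ γ * ‖x - xbar‖ ^ 2)
    (xt vt : EuclideanSpace ℝ (Fin n)) (hxt : xt ∈ C) (hvt : vt ∈ C)
    (αt : ℝ) (hαt : αt ∈ Set.Ioc (0 : ℝ) 1)
    (hneg : Δ xt (αt • (vt - xt)) ≤ 0)
    (xt1 : EuclideanSpace ℝ (Fin n)) (hstep : xt1 = (1 - αt) • xt + αt • vt) :
    0 ≤ -Δ xt (αt • (vt - xt)) / αt ∧
      -Δ xt (αt • (vt - xt)) / αt ≤ (f xt - f xt1) / αt + αt * γ * D ^ 2 := by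
  obtain ⟨hα0, hα1⟩ := hαt
  have hxt1 : xt1 = xt + αt • (vt - xt) := by rw [hstep]; module
  have hkey := neg_model_le_of_convex_step hCconv hdiam f Δ hγ.le happrox hxt hvt ⟨hα0.le, hα1⟩
  rw [← hxt1] at hkey
  refine ⟨div_nonneg (neg_nonneg.2 hneg) hα0.le, ?_⟩
  calc -Δ xt (αt • (vt - xt)) / αt ≤ (f xt - f xt1 + αt ^ 2 * γ * D ^ 2) / αt := by gcongr
    _ = (f xt - f xt1) / αt + αt * γ * D ^ 2 := by field_simp

theorem per_iteration_descent_estimate {n : ℕ}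
    (C : Set (EuclideanSpace ℝ (Fin n))) (hCne : C.Nonempty) (hCconv : Convex ℝ C)
    (D : ℝ) (hD : 0 ≤ D) (hdiam : ∀ u ∈ C, ∀ w ∈ C, ‖u - w‖ ≤ D)
    (f : EuclideanSpace ℝ (Fin n) → ℝ)
    (Δ : EuclideanSpace ℝ (Fin n) → EuclideanSpace ℝ (Fin n) → ℝ)
    (hΔ0 : ∀ xbar, Δ xbar 0 = 0)
    (γ : ℝ) (hγ : 0 < γ)
    (happrox : ∀ x ∈ C, ∀ xbar ∈ C, |f x - f xbar - Δ xbar (x - xbar)| ≤ γ * ‖x - xbar‖ ^ 2)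
    (xt vt : EuclideanSpace ℝ (Fin n)) (hxt : xt ∈ C) (hvt : vt ∈ C)
    (αt : ℝ) (hαt : αt ∈ Set.Ioc (0 : ℝ) 1)
    (hneg : Δ xt (αt • (vt - xt)) ≤ 0)
    (xt1 : EuclideanSpace ℝ (Fin n)) (hstep : xt1 = (1 - αt) • xt + αt • vt) :
    0 ≤ -Δ xt (αt • (vt - xt)) / αt ∧
      -Δ xt (αt • (vt - xt)) / αt ≤ (f xt - f xt1) / αt + αt * γ * D ^ 2 :=
  per_iteration_descent_estimate_general C hCconv D hdiam f Δ γ hγ happrox xt vt hxt hvt αt hαt hneg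
    xt1 hstep
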